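/- arXiv:2505.06916 — 3 statements merged into one kernel-verified Lean document; each statement's English description precedes it below -/
import Mathlib

section
/- Let E be a measurable space, V : E → [1,∞) a measurable function, and B_V the space of measurable functions f with ‖f‖_V := sup_x |f(x)|/V(x) < ∞. Let ν_n, ν be probability measures on E with ‖ν_n − ν‖_V → 0 (where ‖μ‖_V := sup_{‖f‖_V ≤ 1} |∫ f dμ|), and let f_n, f ∈ B_V with sup_n ‖f_n‖_V < ∞ and f_n(x) → f(x) for every x ∈ E. Then ∫ f_n dν_n → ∫ f dν. -/
open MeasureTheory Filter

/-- V-weighted variation distance between two measures: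
`‖μ - ν‖_V = sup { |∫ f dμ - ∫ f dν| : f measurable, ‖f‖_V ≤ 1 }`. -/
noncomputable def VnormDist {E : Type*} [MeasurableSpace E] (V : E → ℝ)
    (μ ν : Measure E) : ℝ :=
  ⨆ f : {f : E → ℝ // Measurable f ∧ ∀ x, |f x| ≤ V x},
    |(∫ x, (f : E → ℝ) x ∂μ) - ∫ x, (f : E → ℝ) x ∂ν|

lemma abs_sub_integral_le_VnormDist {E : Type*} [MeasurableSpace E]
    {V : E → ℝ} {μ ν : Measure E}
    (hVμ : Integrable V μ) (hVν : Integrable V ν)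
    {g : E → ℝ} (hgm : Measurable g) (hgb : ∀ x, |g x| ≤ V x) :
    |(∫ x, g x ∂μ) - ∫ x, g x ∂ν| ≤ VnormDist V μ ν := by
  have key : ∀ (h : E → ℝ), Measurable h → (∀ x, |h x| ≤ V x) →
      |(∫ x, h x ∂μ) - ∫ x, h x ∂ν| ≤ (∫ x, V x ∂μ) + ∫ x, V x ∂ν := by
    intro h hm hb
    have hintμ : Integrable h μ :=
      Integrable.mono hVμ hm.aestronglyMeasurable (Filter.Eventually.of_forall fun x => by
        simpa [Real.norm_eq_abs, abs_of_nonneg (le_trans (abs_nonneg _) (hb x))] using hb x)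
    have hintν : Integrable h ν :=
      Integrable.mono hVν hm.aestronglyMeasurable (Filter.Eventually.of_forall fun x => by
        simpa [Real.norm_eq_abs, abs_of_nonneg (le_trans (abs_nonneg _) (hb x))] using hb x)
    calc |(∫ x, h x ∂μ) - ∫ x, h x ∂ν| ≤ |∫ x, h x ∂μ| + |∫ x, h x ∂ν| := abs_sub _ _
      _ ≤ (∫ x, V x ∂μ) + ∫ x, V x ∂ν := by
          gcongr
          · have h1 : |∫ x, h x ∂μ| ≤ ∫ x, |h x| ∂μ := by
              simpa [Real.norm_eq_abs] using norm_integral_le_integral_norm (μ := μ) h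
            exact h1.trans (integral_mono hintμ.abs hVμ fun x => hb x)
          · have h2 : |∫ x, h x ∂ν| ≤ ∫ x, |h x| ∂ν := by
              simpa [Real.norm_eq_abs] using norm_integral_le_integral_norm (μ := ν) h
            exact h2.trans (integral_mono hintν.abs hVν fun x => hb x)
  have hbdd : BddAbove (Set.range fun f : {f : E → ℝ // Measurable f ∧ ∀ x, |f x| ≤ V x} =>
      |(∫ x, (f : E → ℝ) x ∂μ) - ∫ x, (f : E → ℝ) x ∂ν|) := by
    refine ⟨(∫ x, V x ∂μ) + ∫ x, V x ∂ν, ?_⟩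
    rintro r ⟨⟨h, hm, hb⟩, rfl⟩
    exact key h hm hb
  exact le_ciSup hbdd (⟨g, hgm, hgb⟩ : {f : E → ℝ // Measurable f ∧ ∀ x, |f x| ≤ V x})

theorem stmt0 {E : Type*} [MeasurableSpace E]
    (V : E → ℝ) (hVmeas : Measurable V) (hV1 : ∀ x, 1 ≤ V x)
    (ν : ℕ → Measure E) (νlim : Measure E)
    (hνn : ∀ n, IsProbabilityMeasure (ν n)) (hν : IsProbabilityMeasure νlim)
    (hVint : ∀ n, Integrable V (ν n)) (hVint' : Integrable V νlim)
    (hconv : Tendsto (fun n => VnormDist V (ν n) νlim) atTop (nhds 0))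
    (f : ℕ → E → ℝ) (flim : E → ℝ)
    (hfmeas : ∀ n, Measurable (f n)) (hflimmeas : Measurable flim)
    (M : ℝ) (hfbdd : ∀ n x, |f n x| ≤ M * V x) (hflimbdd : ∀ x, |flim x| ≤ M * V x)
    (hptwise : ∀ x, Tendsto (fun n => f n x) atTop (nhds (flim x))) :
    Tendsto (fun n => ∫ x, f n x ∂(ν n)) atTop (nhds (∫ x, flim x ∂νlim)) := by
  set M' : ℝ := max M 1 with hM'
  have hM'pos : 0 < M' := lt_of_lt_of_le one_pos (le_max_right _ _)
  have hfb' : ∀ n x, |f n x| ≤ M' * V x := fun n x =>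
    (hfbdd n x).trans (by
      have := le_trans zero_le_one (hV1 x)
      nlinarith [le_max_left M 1])
  -- step 1: |∫ f n ∂(ν n) - ∫ f n ∂νlim| ≤ M' * VnormDist
  have step1 : ∀ n, |(∫ x, f n x ∂(ν n)) - ∫ x, f n x ∂νlim| ≤ M' * VnormDist V (ν n) νlim := by
    intro n
    have hg : Measurable fun x => f n x / M' := (hfmeas n).div_const M'
    have hgb : ∀ x, |f n x / M'| ≤ V x := by
      intro x
      rw [abs_div, abs_of_pos hM'pos, div_le_iff₀ hM'pos]
      linarith [hfb' n x, hV1 x]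
    have := abs_sub_integral_le_VnormDist (hVint n) hVint' hg hgb
    rw [integral_div, integral_div, div_sub_div_same, abs_div, abs_of_pos hM'pos,
      div_le_iff₀ hM'pos] at this
    linarith [this]
  -- step 2: dominated convergence on νlim
  have step2 : Tendsto (fun n => ∫ x, f n x ∂νlim) atTop (nhds (∫ x, flim x ∂νlim)) := by
    apply tendsto_integral_of_dominated_convergence (fun x => M' * V x)
      (fun n => (hfmeas n).aestronglyMeasurable) (hVint'.const_mul M')
    · intro n
      exact Filter.Eventually.of_forall fun x => by
        simpa [Real.norm_eq_abs] using hfb' n x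
    · exact Filter.Eventually.of_forall hptwise
  -- step 3: difference tends to 0
  have step3 : Tendsto (fun n => (∫ x, f n x ∂(ν n)) - ∫ x, f n x ∂νlim) atTop (nhds 0) := by
    have hub : Tendsto (fun n => M' * VnormDist V (ν n) νlim) atTop (nhds 0) := by
      simpa using (hconv.const_mul M')
    have hlb : Tendsto (fun n => -(M' * VnormDist V (ν n) νlim)) atTop (nhds 0) := by
      simpa using hub.neg
    refine tendsto_of_tendsto_of_tendsto_of_le_of_le hlb hub ?_ ?_
    · intro n; dsimp only; linarith [(abs_le.mp (step1 n)).1]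
    · intro n; dsimp only; linarith [(abs_le.mp (step1 n)).2]
  have := step3.add step2
  simpa using this
end

section
/- Let Ψ : B(E) → B(E) be an operator such that: (i) there is a function γ : (0,∞) → [0,1) with ‖Ψg_1 − Ψg_2‖_sp ≤ γ(M)‖g_1 − g_2‖_sp whenever ‖g_1‖_sp ≤ M and ‖g_2‖_sp ≤ M (local contraction in span norm); and (ii) there exist k ∈ ℕ and K̃ < ∞ such that ‖Ψ^k g‖_sp ≤ K̃ for all g ∈ B(E). Then there exists w ∈ B(E) with ‖Ψw − w‖_sp = 0, i.e. there is a constant λ ∈ ℝ such that Ψw = w + λ; moreover ‖w‖_sp ≤ K̃, and w is unique up to an additive constant among functions with finite span. -/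
open Set

/-- The span (oscillation) seminorm `‖g‖_sp = sup g - inf g`. -/
noncomputable def spanSem {E : Type*} (g : E → ℝ) : ℝ :=
  sSup (Set.range g) - sInf (Set.range g)

/-- Bounded real-valued functions. -/
def IsBdd {E : Type*} (g : E → ℝ) : Prop := ∃ C : ℝ, ∀ x, |g x| ≤ C

section helpers

variable {E : Type*} [Nonempty E]

lemma IsBdd.bddAbove {g : E → ℝ} (h : IsBdd g) : BddAbove (Set.range g) := by
  obtain ⟨C, hC⟩ := h
  exact ⟨C, by rintro _ ⟨x, rfl⟩; exact (abs_le.1 (hC x)).2⟩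

lemma IsBdd.bddBelow {g : E → ℝ} (h : IsBdd g) : BddBelow (Set.range g) := by
  obtain ⟨C, hC⟩ := h
  exact ⟨-C, by rintro _ ⟨x, rfl⟩; exact (abs_le.1 (hC x)).1⟩

lemma IsBdd.sub {f g : E → ℝ} (hf : IsBdd f) (hg : IsBdd g) :
    IsBdd (fun x => f x - g x) := by
  obtain ⟨C, hC⟩ := hf; obtain ⟨D, hD⟩ := hg
  exact ⟨C + D, fun x => (abs_sub (f x) (g x)).trans (add_le_add (hC x) (hD x))⟩

lemma spanSem_le {g : E → ℝ} {c : ℝ} (h : ∀ x y, g x - g y ≤ c) : spanSem g ≤ c := by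
  obtain ⟨y₀⟩ : Nonempty E := inferInstance
  have hbb : BddBelow (Set.range g) := ⟨g y₀ - c, by rintro _ ⟨x, rfl⟩; linarith [h y₀ x]⟩
  have h1 : sSup (Set.range g) ≤ c + sInf (Set.range g) := by
    refine csSup_le (Set.range_nonempty g) ?_
    rintro _ ⟨x, rfl⟩
    have h2 : g x - c ≤ sInf (Set.range g) := by
      refine le_csInf (Set.range_nonempty g) ?_
      rintro _ ⟨y, rfl⟩; linarith [h x y]
    linarith
  simp only [spanSem]; linarith

lemma sub_le_spanSem {g : E → ℝ} (h : IsBdd g) (x y : E) : g x - g y ≤ spanSem g := by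
  have h1 : g x ≤ sSup (Set.range g) := le_csSup h.bddAbove ⟨x, rfl⟩
  have h2 : sInf (Set.range g) ≤ g y := csInf_le h.bddBelow ⟨y, rfl⟩
  simp only [spanSem]; linarith

lemma abs_sub_le_spanSem {g : E → ℝ} (h : IsBdd g) (x y : E) :
    |g x - g y| ≤ spanSem g :=
  abs_le.2 ⟨by linarith [sub_le_spanSem h y x], sub_le_spanSem h x y⟩

lemma spanSem_nonneg {g : E → ℝ} (h : IsBdd g) : 0 ≤ spanSem g := by
  obtain ⟨x₀⟩ : Nonempty E := inferInstance
  have := sub_le_spanSem h x₀ x₀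
  linarith

lemma spanSem_eq_of_diff {f g : E → ℝ} (hf : IsBdd f) (hg : IsBdd g)
    (h : ∀ x y, f x - f y = g x - g y) : spanSem f = spanSem g :=
  le_antisymm (spanSem_le fun x y => (h x y) ▸ sub_le_spanSem hg x y)
    (spanSem_le fun x y => (h x y).symm ▸ sub_le_spanSem hf x y)

end helpers

theorem stmt7 {E : Type*} [Nonempty E]
    (Ψ : (E → ℝ) → (E → ℝ))
    (hΨbdd : ∀ g, IsBdd g → IsBdd (Ψ g))
    -- Ψ commutes with addition of constants
    (hΨconst : ∀ g (b : ℝ), Ψ (fun x => g x + b) = fun x => Ψ g x + b)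
    -- (i) local contraction in the span seminorm
    (γ : ℝ → ℝ) (hγ : ∀ M > 0, γ M < 1) (hγ0 : ∀ M > 0, 0 ≤ γ M)
    (hcontr : ∀ M > 0, ∀ g₁ g₂, IsBdd g₁ → IsBdd g₂ →
      spanSem g₁ ≤ M → spanSem g₂ ≤ M →
      spanSem (fun x => Ψ g₁ x - Ψ g₂ x) ≤ γ M * spanSem (fun x => g₁ x - g₂ x))
    -- (ii) k-th iterate has uniformly bounded span
    (k : ℕ) (hk : 1 ≤ k) (K : ℝ)
    (hKbdd : ∀ g, IsBdd g → spanSem (Ψ^[k] g) ≤ K) :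
    ∃ w : E → ℝ, IsBdd w ∧ spanSem (fun x => Ψ w x - w x) = 0 ∧
      (∃ lam : ℝ, Ψ w = fun x => w x + lam) ∧ spanSem w ≤ K ∧
      -- uniqueness up to an additive constant
      (∀ w' : E → ℝ, IsBdd w' → (∃ lam' : ℝ, Ψ w' = fun x => w' x + lam') →
        ∃ b : ℝ, ∀ x, w' x = w x + b) := by
  classical
  obtain ⟨x₀⟩ : Nonempty E := inferInstance
  -- iterates of bounded functions are bounded
  have hiterbdd : ∀ (n : ℕ) (g : E → ℝ), IsBdd g → IsBdd (Ψ^[n] g) := by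
    intro n
    induction n with
    | zero => intro g hg; simpa using hg
    | succ n ih =>
      intro g hg
      rw [Function.iterate_succ_apply']
      exact hΨbdd _ (ih g hg)
  obtain ⟨z, hz⟩ : ∃ z : E → ℝ, z = fun _ => 0 := ⟨_, rfl⟩
  have hzbdd : IsBdd z := ⟨0, fun x => by simp [hz]⟩
  obtain ⟨G, hG⟩ : ∃ G : ℕ → E → ℝ, G = fun n => Ψ^[k + n] z := ⟨_, rfl⟩
  have hGbdd : ∀ n, IsBdd (G n) := fun n => by rw [hG]; exact hiterbdd _ _ hzbdd
  have hGspan : ∀ n, spanSem (G n) ≤ K := by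
    intro n
    have : G n = Ψ^[k] (Ψ^[n] z) := by
      simp only [hG]
      rw [Function.iterate_add_apply]
    rw [this]
    exact hKbdd _ (hiterbdd n z hzbdd)
  have hGsucc : ∀ n, G (n + 1) = Ψ (G n) := by
    intro n
    simp only [hG]
    rw [show k + (n + 1) = (k + n) + 1 from rfl, Function.iterate_succ_apply']
  have hK0 : 0 ≤ K := le_trans (spanSem_nonneg (hGbdd 0)) (hGspan 0)
  obtain ⟨M, hMdef⟩ : ∃ M : ℝ, M = K + 1 := ⟨_, rfl⟩
  have hM : 0 < M := by rw [hMdef]; linarith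
  have hKM : K ≤ M := by rw [hMdef]; linarith
  obtain ⟨β, hβeq⟩ : ∃ β : ℝ, β = γ M := ⟨_, rfl⟩
  have hβ1 : β < 1 := by rw [hβeq]; exact hγ M hM
  have hβ0 : 0 ≤ β := by rw [hβeq]; exact hγ0 M hM
  -- differences of consecutive iterates
  obtain ⟨d, hd⟩ : ∃ d : ℕ → ℝ, d = fun n => spanSem (fun x => G (n + 1) x - G n x) := ⟨_, rfl⟩
  have hdbdd : ∀ n, IsBdd (fun x => G (n + 1) x - G n x) :=
    fun n => (hGbdd (n + 1)).sub (hGbdd n)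
  have hd0 : ∀ n, 0 ≤ d n := fun n => by simp only [hd]; exact spanSem_nonneg (hdbdd n)
  have hdrec : ∀ n, d (n + 1) ≤ β * d n := by
    intro n
    have h1 := hcontr M hM (G (n + 1)) (G n) (hGbdd (n + 1)) (hGbdd n)
      ((hGspan (n + 1)).trans hKM) ((hGspan n).trans hKM)
    calc d (n + 1) = spanSem (fun x => Ψ (G (n + 1)) x - Ψ (G n) x) := by
          simp only [hd]; rw [hGsucc (n + 1), hGsucc n]
      _ ≤ β * d n := by simp only [hd]; rw [hβeq]; exact h1
  have hdgeom : ∀ n, d n ≤ d 0 * β ^ n := by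
    intro n
    induction n with
    | zero => simp
    | succ n ih =>
      calc d (n + 1) ≤ β * d n := hdrec n
        _ ≤ β * (d 0 * β ^ n) := by
            exact mul_le_mul_of_nonneg_left ih hβ0
        _ = d 0 * β ^ (n + 1) := by ring
  -- normalized sequence
  obtain ⟨H, hH⟩ : ∃ H : ℕ → E → ℝ, H = fun n x => G n x - G n x₀ := ⟨_, rfl⟩
  have hHabs : ∀ n x, |H n x| ≤ K := by
    intro n x
    have h1 := abs_sub_le_spanSem (hGbdd n) x x₀
    simp only [hH]
    exact h1.trans (hGspan n)
  have hHbdd : ∀ n, IsBdd (H n) := fun n => ⟨K, hHabs n⟩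
  have hHspan : ∀ n, spanSem (H n) ≤ K := by
    intro n
    have : spanSem (H n) = spanSem (G n) :=
      spanSem_eq_of_diff (hHbdd n) (hGbdd n) (fun x y => by simp only [hH]; ring)
    rw [this]; exact hGspan n
  have hHdist : ∀ x n, dist (H n x) (H (n + 1) x) ≤ d 0 * β ^ n := by
    intro x n
    have h1 : H n x - H (n + 1) x =
        (fun y => G (n + 1) y - G n y) x₀ - (fun y => G (n + 1) y - G n y) x := by
      simp only [hH]; ring
    rw [Real.dist_eq, h1]
    have h2 := hdgeom n
    have hdn : d n = spanSem (fun x => G (n + 1) x - G n x) := by rw [hd]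
    rw [hdn] at h2
    exact (abs_sub_le_spanSem (hdbdd n) x₀ x).trans h2
  have hcauchy : ∀ x, CauchySeq (fun n => H n x) :=
    fun x => cauchySeq_of_le_geometric β (d 0) hβ1 (hHdist x)
  have hconv : ∀ x : E, ∃ l : ℝ, Filter.Tendsto (fun n => H n x) Filter.atTop (nhds l) :=
    fun x => cauchySeq_tendsto_of_complete (hcauchy x)
  choose w hw using hconv
  -- quantitative bound on the distance to the limit
  have hwdist : ∀ x n, dist (H n x) (w x) ≤ d 0 * β ^ n / (1 - β) :=
    fun x n => dist_le_of_le_geometric_of_tendsto β (d 0) hβ1 (hHdist x) (hw x) n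
  obtain ⟨Err, hErr⟩ : ∃ Err : ℕ → ℝ, Err = fun n => d 0 * β ^ n / (1 - β) := ⟨_, rfl⟩
  have hErr0 : ∀ n, 0 ≤ Err n := by
    intro n
    simp only [hErr]
    apply div_nonneg (mul_nonneg (hd0 0) (pow_nonneg hβ0 n))
    linarith
  have hErrtend : Filter.Tendsto Err Filter.atTop (nhds 0) := by
    have h1 : Filter.Tendsto (fun n : ℕ => β ^ n) Filter.atTop (nhds 0) :=
      tendsto_pow_atTop_nhds_zero_of_lt_one hβ0 hβ1
    have h2 := h1.const_mul (d 0 / (1 - β))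
    simp only [mul_zero] at h2
    have h3 : Err = fun n => d 0 / (1 - β) * β ^ n := by
      rw [hErr]; funext n; ring
    rw [h3]; exact h2
  -- w is bounded
  have hwbdd : IsBdd w := by
    refine ⟨K + Err 0, fun x => ?_⟩
    have hE : Err 0 = d 0 * β ^ 0 / (1 - β) := by rw [hErr]
    have h1 := hwdist x 0
    rw [Real.dist_eq] at h1
    have h2 := hHabs 0 x
    have := abs_sub_abs_le_abs_sub (w x) (H 0 x)
    rw [abs_sub_comm (H 0 x) (w x)] at h1
    linarith
  -- span of w is at most K
  have hwK : spanSem w ≤ K := by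
    refine spanSem_le fun x y => ?_
    have hle : ∀ n, w x - w y ≤ K + 2 * Err n := by
      intro n
      have h1 := hwdist x n
      have h2 := hwdist y n
      rw [Real.dist_eq] at h1 h2
      have h3 : H n x - H n y ≤ K := by
        have := abs_sub_le_spanSem (hHbdd n) x y
        have h4 := (abs_le.1 this).2
        linarith [hHspan n]
      have h5 := (abs_le.1 h1).1
      have h6 := (abs_le.1 h2).2
      have hE : Err n = d 0 * β ^ n / (1 - β) := by rw [hErr]
      linarith
    have hlim : Filter.Tendsto (fun n => K + 2 * Err n) Filter.atTop (nhds K) := by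
      have := (hErrtend.const_mul 2).const_add K
      simpa using this
    exact ge_of_tendsto' hlim hle
  have hwM : spanSem w ≤ M := hwK.trans hKM
  -- span of (w - H n) is at most 2 * Err n
  have hwHspan : ∀ n, spanSem (fun x => w x - H n x) ≤ 2 * Err n := by
    intro n
    refine spanSem_le fun x y => ?_
    have h1 := hwdist x n
    have h2 := hwdist y n
    rw [Real.dist_eq] at h1 h2
    have h3 := (abs_le.1 h1).1
    have h4 := (abs_le.1 h2).2
    have h5 := (abs_le.1 h1).2
    have h6 := (abs_le.1 h2).1
    have hE : Err n = d 0 * β ^ n / (1 - β) := by rw [hErr]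
    show w x - H n x - (w y - H n y) ≤ 2 * Err n
    linarith
  -- Ψ (H n) in terms of G
  have hΨH : ∀ n, Ψ (H n) = fun x => G (n + 1) x - G n x₀ := by
    intro n
    have h1 : H n = fun x => G n x + (-(G n x₀)) := by
      funext x; simp only [hH]; ring
    rw [h1, hΨconst (G n) (-(G n x₀)), ← hGsucc n]
    funext x; ring
  -- span of (Ψ w - w) is zero
  have hmain : spanSem (fun x => Ψ w x - w x) = 0 := by
    have hΨwbdd : IsBdd (Ψ w) := hΨbdd w hwbdd
    have hbdd : IsBdd (fun x => Ψ w x - w x) := hΨwbdd.sub hwbdd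
    refine le_antisymm ?_ (spanSem_nonneg hbdd)
    refine spanSem_le fun x y => ?_
    have hle : ∀ n, Ψ w x - w x - (Ψ w y - w y) ≤ (2 + 2 * β) * Err n + d 0 * β ^ n := by
      intro n
      have hA : spanSem (fun x => Ψ w x - Ψ (H n) x) ≤ β * (2 * Err n) := by
        have h1 := hcontr M hM w (H n) hwbdd (hHbdd n) hwM ((hHspan n).trans hKM)
        have h2 : β * spanSem (fun x => w x - H n x) ≤ β * (2 * Err n) :=
          mul_le_mul_of_nonneg_left (hwHspan n) hβ0
        rw [← hβeq] at h1
        exact h1.trans h2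
      have hB : spanSem (fun x => Ψ (H n) x - H n x) ≤ d 0 * β ^ n := by
        have h1 : (fun x => Ψ (H n) x - H n x) = fun x => G (n + 1) x - G n x := by
          rw [hΨH n]; funext x; simp only [hH]; ring
        rw [h1]
        have h2 := hdgeom n
        have hdn : d n = spanSem (fun x => G (n + 1) x - G n x) := by rw [hd]
        rw [hdn] at h2
        exact h2
      have hC : spanSem (fun x => H n x - w x) ≤ 2 * Err n := by
        refine spanSem_le fun x y => ?_
        have h1 := hwdist x n
        have h2 := hwdist y n
        rw [Real.dist_eq] at h1 h2
        have h3 := (abs_le.1 h1).2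
        have h4 := (abs_le.1 h2).1
        have hE : Err n = d 0 * β ^ n / (1 - β) := by rw [hErr]
        show H n x - w x - (H n y - w y) ≤ 2 * Err n
        linarith
      have hAbdd : IsBdd (fun x => Ψ w x - Ψ (H n) x) := hΨwbdd.sub (hΨbdd _ (hHbdd n))
      have hBbdd : IsBdd (fun x => Ψ (H n) x - H n x) := (hΨbdd _ (hHbdd n)).sub (hHbdd n)
      have hCbdd : IsBdd (fun x => H n x - w x) := (hHbdd n).sub hwbdd
      have hxA := sub_le_spanSem hAbdd x y
      have hxB := sub_le_spanSem hBbdd x y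
      have hxC := sub_le_spanSem hCbdd x y
      nlinarith [hErr0 n]
    have hlim : Filter.Tendsto (fun n => (2 + 2 * β) * Err n + d 0 * β ^ n)
        Filter.atTop (nhds 0) := by
      have h1 : Filter.Tendsto (fun n : ℕ => β ^ n) Filter.atTop (nhds 0) :=
        tendsto_pow_atTop_nhds_zero_of_lt_one hβ0 hβ1
      have h2 := (hErrtend.const_mul (2 + 2 * β)).add (h1.const_mul (d 0))
      simpa using h2
    exact ge_of_tendsto' hlim hle
  -- Ψ w = w + lam
  have hconst : ∃ lam : ℝ, Ψ w = fun x => w x + lam := by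
    refine ⟨Ψ w x₀ - w x₀, funext fun x => ?_⟩
    have hbdd : IsBdd (fun x => Ψ w x - w x) := (hΨbdd w hwbdd).sub hwbdd
    have h1 := abs_sub_le_spanSem hbdd x x₀
    rw [hmain] at h1
    simp only [abs_nonpos_iff] at h1
    have : Ψ w x - w x - (Ψ w x₀ - w x₀) = 0 := by
      simpa using h1
    linarith
  refine ⟨w, hwbdd, hmain, hconst, hwK, ?_⟩
  -- uniqueness up to an additive constant
  rintro w' hw'bdd ⟨lam', hlam'⟩
  obtain ⟨lam, hlam⟩ := hconst
  set M' : ℝ := max (spanSem w) (spanSem w') + 1 with hM'def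
  have hw'0 : 0 ≤ spanSem w' := spanSem_nonneg hw'bdd
  have hw0 : 0 ≤ spanSem w := spanSem_nonneg hwbdd
  have hM' : 0 < M' := by
    have := le_max_left (spanSem w) (spanSem w')
    simp only [hM'def]
    nlinarith
  have hwM' : spanSem w ≤ M' := by
    have := le_max_left (spanSem w) (spanSem w')
    simp only [hM'def]; linarith
  have hw'M' : spanSem w' ≤ M' := by
    have := le_max_right (spanSem w) (spanSem w')
    simp only [hM'def]; linarith
  have hcon := hcontr M' hM' w w' hwbdd hw'bdd hwM' hw'M'
  have heq : spanSem (fun x => Ψ w x - Ψ w' x) = spanSem (fun x => w x - w' x) := by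
    refine spanSem_eq_of_diff ((hΨbdd w hwbdd).sub (hΨbdd w' hw'bdd))
      (hwbdd.sub hw'bdd) (fun x y => ?_)
    rw [hlam, hlam']
    ring
  rw [heq] at hcon
  have hs0 : 0 ≤ spanSem (fun x => w x - w' x) := spanSem_nonneg (hwbdd.sub hw'bdd)
  have hγM' : γ M' < 1 := hγ M' hM'
  have hszero : spanSem (fun x => w x - w' x) = 0 := by nlinarith
  refine ⟨w' x₀ - w x₀, fun x => ?_⟩
  have h1 := abs_sub_le_spanSem (hwbdd.sub hw'bdd) x x₀
  rw [hszero] at h1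
  simp only [abs_nonpos_iff] at h1
  have : w x - w' x - (w x₀ - w' x₀) = 0 := by simpa using h1
  linarith
end

section
/- Let (X_t)_{t≥0} be a continuous-time Markov process on E, c : E → ℝ bounded measurable, α ≠ 0, and suppose λ ∈ ℝ and bounded w with ‖w‖_sp ≤ K̃ satisfy e^{αw(x)} = E_x[exp(α(∫_0^1 c(X_s)ds − λ) + α w(X_1))]. Then for every k ∈ ℕ, |λ − (1/(αk)) ln E_x[exp(α ∫_0^k c(X_s)ds)]| ≤ 2K̃/k, and moreover, since c is bounded, liminf_{t→∞, t∈ℝ} (1/(αt)) ln E_x[exp(α ∫_0^t c(X_s)ds)] = liminf_{k→∞, k∈ℕ} (1/(αk)) ln E_x[exp(α ∫_0^k c(X_s)ds)] = λ for every x ∈ E. -/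
open MeasureTheory Filter Topology

theorem stmt10 {E : Type*} [MeasurableSpace E] {Ω : Type*} [MeasurableSpace Ω]
    -- continuous-time Markov family: for each x, a path measure μ x and process X
    (μ : E → Measure Ω) (hμ : ∀ x, IsProbabilityMeasure (μ x))
    (X : ℝ → Ω → E) (hX : Measurable fun p : ℝ × Ω => X p.1 p.2)
    (c : E → ℝ) (hc : Measurable c) (Cb : ℝ) (hcb : ∀ x, |c x| ≤ Cb)
    (α : ℝ) (hα : α ≠ 0) (lam : ℝ)
    (w : E → ℝ) (hw : Measurable w) (Wb : ℝ) (hwb : ∀ x, |w x| ≤ Wb)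
    (K : ℝ) (hwspan : spanSem w ≤ K)
    -- multiplicative Poisson equation over one unit of time:
    -- e^{α w(x)} = E_x[exp(α (∫_0^1 c(X_s) ds - lam) + α w(X_1))]
    (hPoisson : ∀ x, Real.exp (α * w x) =
      ∫ ω, Real.exp (α * ((∫ s in (0:ℝ)..1, c (X s ω)) - lam) + α * w (X 1 ω)) ∂(μ x))
    -- Markov property at integer times for the multiplicative functional
    (hMarkov : ∀ (k : ℕ) (f : E → ℝ), Measurable f → (∃ C, ∀ y, |f y| ≤ C) → ∀ x,
      (∫ ω, Real.exp (α * ∫ s in (0:ℝ)..((k : ℝ) + 1), c (X s ω)) *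
          f (X ((k : ℝ) + 1) ω) ∂(μ x)) =
      ∫ ω, Real.exp (α * ∫ s in (0:ℝ)..(k : ℝ), c (X s ω)) *
          (∫ ω', Real.exp (α * ∫ s in (0:ℝ)..1, c (X s ω')) *
            f (X 1 ω') ∂(μ (X (k : ℝ) ω))) ∂(μ x)) :
    -- the approximation bound at integer horizons
    (∀ (k : ℕ), 1 ≤ k → ∀ x : E,
      |lam - 1 / (α * (k : ℝ)) *
        Real.log (∫ ω, Real.exp (α * ∫ s in (0:ℝ)..(k : ℝ), c (X s ω)) ∂(μ x))|
        ≤ 2 * K / (k : ℝ)) ∧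
    -- the real-time and integer-time long-run risk-sensitive rewards coincide with λ
    (∀ x : E,
      Filter.liminf (fun t : ℝ => 1 / (α * t) *
        Real.log (∫ ω, Real.exp (α * ∫ s in (0:ℝ)..t, c (X s ω)) ∂(μ x))) atTop = lam ∧
      Filter.liminf (fun k : ℕ => 1 / (α * (k : ℝ)) *
        Real.log (∫ ω, Real.exp (α * ∫ s in (0:ℝ)..(k : ℝ), c (X s ω)) ∂(μ x))) atTop
        = lam) := by
  have hα0 : 0 < |α| := abs_pos.2 hα
  -- basic measurability
  have hXm : ∀ t : ℝ, Measurable (X t) := fun t =>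
    hX.comp (measurable_const.prodMk measurable_id)
  have hcX : ∀ ω, Measurable fun s : ℝ => c (X s ω) := fun ω =>
    hc.comp (hX.comp (measurable_id.prodMk measurable_const))
  have hii : ∀ (ω) (a b : ℝ), IntervalIntegrable (fun s => c (X s ω)) volume a b := by
    intro ω a b
    exact (intervalIntegrable_const (c := Cb)).mono_fun' ((hcX ω).aestronglyMeasurable)
      (Eventually.of_forall fun s => by simpa using hcb (X s ω))
  have hFb : ∀ (t : ℝ) (ω), |∫ s in (0:ℝ)..t, c (X s ω)| ≤ Cb * |t| := by
    intro t ω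
    have := intervalIntegral.norm_integral_le_of_norm_le_const
      (C := Cb) (f := fun s => c (X s ω)) (a := 0) (b := t)
      (fun s _ => by simpa using hcb (X s ω))
    simpa using this
  have hFm : ∀ t : ℝ, Measurable fun ω => ∫ s in (0:ℝ)..t, c (X s ω) := by
    intro t
    have h1 : StronglyMeasurable fun p : Ω × ℝ => c (X p.2 p.1) :=
      (hc.comp (hX.comp measurable_swap)).stronglyMeasurable
    have h2 : ∀ a b : ℝ, Measurable fun ω => ∫ s in Set.Ioc a b, c (X s ω) := fun a b =>
      (h1.integral_prod_right' (ν := volume.restrict (Set.Ioc a b))).measurable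
    exact ((h2 0 t).sub (h2 t 0))
  -- integrability
  have hInt : ∀ (x : E) (t : ℝ) (g : Ω → ℝ) (C : ℝ), Measurable g → (∀ ω, |g ω| ≤ C) →
      Integrable (fun ω => Real.exp (α * ∫ s in (0:ℝ)..t, c (X s ω)) * g ω) (μ x) := by
    intro x t g C hg hgC
    haveI := hμ x
    have hm : Measurable fun ω => Real.exp (α * ∫ s in (0:ℝ)..t, c (X s ω)) * g ω :=
      (Real.measurable_exp.comp ((hFm t).const_mul α)).mul hg
    refine ⟨hm.aestronglyMeasurable, HasFiniteIntegral.of_bounded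
      (C := Real.exp (|α| * (Cb * |t|)) * C) (Eventually.of_forall fun ω => ?_)⟩
    have h1 : Real.exp (α * ∫ s in (0:ℝ)..t, c (X s ω)) ≤ Real.exp (|α| * (Cb * |t|)) := by
      apply Real.exp_le_exp.2
      calc α * ∫ s in (0:ℝ)..t, c (X s ω) ≤ |α * ∫ s in (0:ℝ)..t, c (X s ω)| := le_abs_self _
        _ = |α| * |∫ s in (0:ℝ)..t, c (X s ω)| := abs_mul _ _
        _ ≤ |α| * (Cb * |t|) := mul_le_mul_of_nonneg_left (hFb t ω) (abs_nonneg _)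
    calc ‖Real.exp (α * ∫ s in (0:ℝ)..t, c (X s ω)) * g ω‖
        = Real.exp (α * ∫ s in (0:ℝ)..t, c (X s ω)) * |g ω| := by
          rw [Real.norm_eq_abs, abs_mul, abs_of_pos (Real.exp_pos _)]
      _ ≤ Real.exp (|α| * (Cb * |t|)) * C :=
          mul_le_mul h1 (hgC ω) (abs_nonneg _) (Real.exp_pos _).le
  have hJint : ∀ (x : E) (t : ℝ),
      Integrable (fun ω => Real.exp (α * ∫ s in (0:ℝ)..t, c (X s ω))) (μ x) := by
    intro x t
    simpa using hInt x t (fun _ => 1) 1 measurable_const (fun ω => by norm_num)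
  have hJpos : ∀ (x : E) (t : ℝ),
      0 < ∫ ω, Real.exp (α * ∫ s in (0:ℝ)..t, c (X s ω)) ∂(μ x) := by
    intro x t
    haveI := hμ x
    have h1 : ∀ ω, Real.exp (-(|α| * (Cb * |t|))) ≤
        Real.exp (α * ∫ s in (0:ℝ)..t, c (X s ω)) := by
      intro ω
      apply Real.exp_le_exp.2
      have h2 : |α * ∫ s in (0:ℝ)..t, c (X s ω)| ≤ |α| * (Cb * |t|) := by
        rw [abs_mul]; exact mul_le_mul_of_nonneg_left (hFb t ω) (abs_nonneg _)
      linarith [neg_abs_le (α * ∫ s in (0:ℝ)..t, c (X s ω))]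
    calc (0:ℝ) < Real.exp (-(|α| * (Cb * |t|))) := Real.exp_pos _
      _ = ∫ _ω, Real.exp (-(|α| * (Cb * |t|))) ∂(μ x) := by simp
      _ ≤ _ := integral_mono (integrable_const _) (hJint x t) h1
  -- the one-step identity and its iteration
  have hfb : ∀ y : E, |Real.exp (α * w y)| ≤ Real.exp (|α| * Wb) := by
    intro y
    rw [abs_of_pos (Real.exp_pos _)]
    apply Real.exp_le_exp.2
    calc α * w y ≤ |α * w y| := le_abs_self _
      _ = |α| * |w y| := abs_mul _ _
      _ ≤ |α| * Wb := mul_le_mul_of_nonneg_left (hwb y) (abs_nonneg _)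
  have hbase : ∀ y : E, (∫ ω', Real.exp (α * ∫ s in (0:ℝ)..1, c (X s ω')) *
      Real.exp (α * w (X 1 ω')) ∂(μ y)) = Real.exp (α * w y + α * lam) := by
    intro y
    have h0 := hPoisson y
    have heq : ∀ ω, Real.exp (α * ((∫ s in (0:ℝ)..1, c (X s ω)) - lam) + α * w (X 1 ω)) =
        Real.exp (α * ∫ s in (0:ℝ)..1, c (X s ω)) * Real.exp (α * w (X 1 ω)) *
          Real.exp (-(α * lam)) := fun ω => by
      rw [← Real.exp_add, ← Real.exp_add]; ring_nf
    simp only [heq] at h0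
    rw [integral_mul_const] at h0
    have := congrArg (· * Real.exp (α * lam)) h0
    simp only [mul_assoc, ← Real.exp_add] at this
    simpa [Real.exp_add] using this.symm
  have hA : ∀ (k : ℕ) (x : E),
      (∫ ω, Real.exp (α * ∫ s in (0:ℝ)..((k:ℝ)+1), c (X s ω)) *
        Real.exp (α * w (X ((k:ℝ)+1) ω)) ∂(μ x)) =
      Real.exp (α * w x + α * lam * ((k:ℝ)+1)) := by
    intro k
    induction k with
    | zero =>
      intro x
      simpa using hbase x
    | succ k ih =>
      intro x
      have hM := hMarkov (k+1) (fun y => Real.exp (α * w y))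
        (Real.measurable_exp.comp (hw.const_mul α))
        ⟨Real.exp (|α| * Wb), hfb⟩ x
      push_cast at hM ⊢
      rw [hM]
      simp only [hbase]
      have heq : ∀ ω, Real.exp (α * ∫ s in (0:ℝ)..((k:ℝ)+1), c (X s ω)) *
          Real.exp (α * w (X ((k:ℝ)+1) ω) + α * lam) =
          Real.exp (α * ∫ s in (0:ℝ)..((k:ℝ)+1), c (X s ω)) *
            Real.exp (α * w (X ((k:ℝ)+1) ω)) * Real.exp (α * lam) := fun ω => by
        rw [Real.exp_add]; ring
      simp only [heq]
      rw [integral_mul_const, ih x, ← Real.exp_add]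
      ring_nf
  -- span bound
  have hspan : ∀ x y : E, |w y - w x| ≤ K := by
    intro x y
    have hba : BddAbove (Set.range w) := ⟨Wb, fun z hz => by
      obtain ⟨u, rfl⟩ := hz; exact (abs_le.1 (hwb u)).2⟩
    have hbb : BddBelow (Set.range w) := ⟨-Wb, fun z hz => by
      obtain ⟨u, rfl⟩ := hz; exact (abs_le.1 (hwb u)).1⟩
    have h1 : ∀ z : E, w z ≤ sSup (Set.range w) := fun z => le_csSup hba ⟨z, rfl⟩
    have h2 : ∀ z : E, sInf (Set.range w) ≤ w z := fun z => csInf_le hbb ⟨z, rfl⟩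
    have hs := hwspan
    rw [spanSem] at hs
    rw [abs_sub_le_iff]
    constructor <;> [linarith [h1 y, h2 x]; linarith [h1 x, h2 y]]
  -- the key log estimate at integer times
  have hlog : ∀ (k : ℕ), 1 ≤ k → ∀ x : E,
      |α * lam * (k:ℝ) - Real.log (∫ ω, Real.exp
        (α * ∫ s in (0:ℝ)..(k:ℝ), c (X s ω)) ∂(μ x))| ≤ |α| * K := by
    intro k hk x
    obtain ⟨j, rfl⟩ : ∃ j, k = j + 1 := ⟨k - 1, (Nat.succ_pred_eq_of_pos hk).symm⟩
    have hA' := hA j x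
    push_cast
    set n : ℝ := (j:ℝ) + 1 with hn
    have hJp := hJpos x n
    have hwle : ∀ ω, α * w x - |α| * K ≤ α * w (X n ω) ∧
        α * w (X n ω) ≤ α * w x + |α| * K := by
      intro ω
      have h5 : |α * (w (X n ω) - w x)| ≤ |α| * K := by
        rw [abs_mul]; exact mul_le_mul_of_nonneg_left (hspan x _) (abs_nonneg _)
      have h6 : α * (w (X n ω) - w x) = α * w (X n ω) - α * w x := by ring
      constructor <;> [linarith [neg_abs_le (α * (w (X n ω) - w x))];
        linarith [le_abs_self (α * (w (X n ω) - w x))]]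
    have hint2 : Integrable (fun ω => Real.exp (α * ∫ s in (0:ℝ)..n, c (X s ω)) *
        Real.exp (α * w (X n ω))) (μ x) :=
      hInt x n _ (Real.exp (|α| * Wb))
        (Real.measurable_exp.comp ((hw.comp (hXm n)).const_mul α)) (fun ω => hfb _)
    have hlo : Real.exp (α * w x - |α| * K) *
        (∫ ω, Real.exp (α * ∫ s in (0:ℝ)..n, c (X s ω)) ∂(μ x)) ≤
        Real.exp (α * w x + α * lam * n) := by
      rw [← hA']
      calc Real.exp (α * w x - |α| * K) *
            (∫ ω, Real.exp (α * ∫ s in (0:ℝ)..n, c (X s ω)) ∂(μ x))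
          = ∫ ω, Real.exp (α * w x - |α| * K) *
            Real.exp (α * ∫ s in (0:ℝ)..n, c (X s ω)) ∂(μ x) := (integral_const_mul _ _).symm
        _ ≤ _ := by
            apply integral_mono ((hJint x n).const_mul _) hint2
            intro ω
            dsimp only
            rw [mul_comm (Real.exp (α * w x - |α| * K))]
            exact mul_le_mul_of_nonneg_left (Real.exp_le_exp.2 (hwle ω).1)
              (Real.exp_pos _).le
    have hhi : Real.exp (α * w x + α * lam * n) ≤ Real.exp (α * w x + |α| * K) *
        (∫ ω, Real.exp (α * ∫ s in (0:ℝ)..n, c (X s ω)) ∂(μ x)) := by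
      rw [← hA']
      calc (∫ ω, Real.exp (α * ∫ s in (0:ℝ)..n, c (X s ω)) *
            Real.exp (α * w (X n ω)) ∂(μ x))
          ≤ ∫ ω, Real.exp (α * w x + |α| * K) *
            Real.exp (α * ∫ s in (0:ℝ)..n, c (X s ω)) ∂(μ x) := by
            apply integral_mono hint2 ((hJint x n).const_mul _)
            intro ω
            dsimp only
            rw [mul_comm (Real.exp (α * w x + |α| * K))]
            exact mul_le_mul_of_nonneg_left (Real.exp_le_exp.2 (hwle ω).2)
              (Real.exp_pos _).le
        _ = _ := integral_const_mul _ _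
    have l1 := Real.log_le_log (by positivity) hlo
    rw [Real.log_mul (Real.exp_ne_zero _) (ne_of_gt hJp), Real.log_exp, Real.log_exp] at l1
    have l2 := Real.log_le_log (Real.exp_pos _) hhi
    rw [Real.log_mul (Real.exp_ne_zero _) (ne_of_gt hJp), Real.log_exp, Real.log_exp] at l2
    rw [abs_le]
    constructor <;> linarith
  -- generic algebraic step from the log estimate to the normalized estimate
  have habs : ∀ (T L B : ℝ), 0 < T → |α * lam * T - L| ≤ |α| * B →
      |1 / (α * T) * L - lam| ≤ B / T := by
    intro T L B hT h
    have heq : 1 / (α * T) * L - lam = -((α * lam * T - L) / (α * T)) := by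
      field_simp
      ring
    rw [heq, abs_neg, abs_div, abs_mul, abs_of_pos hT,
      div_le_div_iff₀ (by positivity) hT]
    calc |α * lam * T - L| * T ≤ (|α| * B) * T := mul_le_mul_of_nonneg_right h hT.le
      _ = B * (|α| * T) := by ring
  -- real-time log estimate
  have hlogR : ∀ (x : E) (t : ℝ), 1 ≤ t →
      |α * lam * t - Real.log (∫ ω, Real.exp
        (α * ∫ s in (0:ℝ)..t, c (X s ω)) ∂(μ x))| ≤ |α| * (Cb + K + |lam|) := by
    intro x t ht
    have hCb0 : 0 ≤ Cb := le_trans (abs_nonneg _) (hcb x)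
    set n : ℕ := ⌊t⌋₊ with hn
    have hn1 : 1 ≤ n := Nat.le_floor (by exact_mod_cast ht)
    have hnt : (n:ℝ) ≤ t := Nat.floor_le (by linarith)
    have htn : t < (n:ℝ) + 1 := Nat.lt_floor_add_one t
    have hdiff : ∀ ω, |(∫ s in (0:ℝ)..t, c (X s ω)) -
        ∫ s in (0:ℝ)..(n:ℝ), c (X s ω)| ≤ Cb := by
      intro ω
      have hadd := intervalIntegral.integral_add_adjacent_intervals
        (hii ω 0 n) (hii ω n t)
      have hb : ‖∫ s in (n:ℝ)..t, c (X s ω)‖ ≤ Cb * |t - (n:ℝ)| :=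
        intervalIntegral.norm_integral_le_of_norm_le_const
          (fun s _ => by simpa using hcb (X s ω))
      have habs1 : |t - (n:ℝ)| ≤ 1 := by
        rw [abs_of_nonneg (by linarith)]; linarith
      have hrw : (∫ s in (0:ℝ)..t, c (X s ω)) - ∫ s in (0:ℝ)..(n:ℝ), c (X s ω) =
          ∫ s in (n:ℝ)..t, c (X s ω) := by rw [← hadd]; ring
      rw [hrw]
      calc |∫ s in (n:ℝ)..t, c (X s ω)| ≤ Cb * |t - (n:ℝ)| := by simpa using hb
        _ ≤ Cb * 1 := mul_le_mul_of_nonneg_left habs1 hCb0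
        _ = Cb := mul_one _
    have hptw : ∀ ω, α * (∫ s in (0:ℝ)..t, c (X s ω)) -
        α * ∫ s in (0:ℝ)..(n:ℝ), c (X s ω) ∈ Set.Icc (-(|α| * Cb)) (|α| * Cb) := by
      intro ω
      have h5 : |α * ((∫ s in (0:ℝ)..t, c (X s ω)) -
          ∫ s in (0:ℝ)..(n:ℝ), c (X s ω))| ≤ |α| * Cb := by
        rw [abs_mul]; exact mul_le_mul_of_nonneg_left (hdiff ω) (abs_nonneg _)
      have h6 : α * ((∫ s in (0:ℝ)..t, c (X s ω)) - ∫ s in (0:ℝ)..(n:ℝ), c (X s ω)) =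
          α * (∫ s in (0:ℝ)..t, c (X s ω)) - α * ∫ s in (0:ℝ)..(n:ℝ), c (X s ω) := by
        ring
      constructor
      · linarith [neg_abs_le (α * ((∫ s in (0:ℝ)..t, c (X s ω)) -
          ∫ s in (0:ℝ)..(n:ℝ), c (X s ω)))]
      · linarith [le_abs_self (α * ((∫ s in (0:ℝ)..t, c (X s ω)) -
          ∫ s in (0:ℝ)..(n:ℝ), c (X s ω)))]
    have h1 : Real.exp (-(|α| * Cb)) *
        (∫ ω, Real.exp (α * ∫ s in (0:ℝ)..(n:ℝ), c (X s ω)) ∂(μ x)) ≤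
        ∫ ω, Real.exp (α * ∫ s in (0:ℝ)..t, c (X s ω)) ∂(μ x) := by
      rw [← integral_const_mul]
      apply integral_mono ((hJint x n).const_mul _) (hJint x t)
      intro ω
      dsimp only
      rw [← Real.exp_add]
      exact Real.exp_le_exp.2 (by linarith [(hptw ω).1])
    have h2 : (∫ ω, Real.exp (α * ∫ s in (0:ℝ)..t, c (X s ω)) ∂(μ x)) ≤
        Real.exp (|α| * Cb) *
        (∫ ω, Real.exp (α * ∫ s in (0:ℝ)..(n:ℝ), c (X s ω)) ∂(μ x)) := by
      rw [← integral_const_mul]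
      apply integral_mono (hJint x t) ((hJint x n).const_mul _)
      intro ω
      dsimp only
      rw [← Real.exp_add]
      exact Real.exp_le_exp.2 (by linarith [(hptw ω).2])
    have hJnp := hJpos x n
    have hJtp := hJpos x t
    have l1 := Real.log_le_log (by positivity) h1
    rw [Real.log_mul (Real.exp_ne_zero _) (ne_of_gt hJnp), Real.log_exp] at l1
    have l2 := Real.log_le_log hJtp h2
    rw [Real.log_mul (Real.exp_ne_zero _) (ne_of_gt hJnp), Real.log_exp] at l2
    have hl := hlog n hn1 x
    have e3 : |α * lam * t - α * lam * (n:ℝ)| ≤ |α| * |lam| := by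
      have hrw : α * lam * t - α * lam * (n:ℝ) = (α * lam) * (t - (n:ℝ)) := by ring
      rw [hrw, abs_mul, abs_mul]
      have habs1 : |t - (n:ℝ)| ≤ 1 := by
        rw [abs_of_nonneg (by linarith)]; linarith
      calc |α| * |lam| * |t - (n:ℝ)| ≤ |α| * |lam| * 1 :=
            mul_le_mul_of_nonneg_left habs1 (by positivity)
        _ = |α| * |lam| := mul_one _
    have hchain : |α * lam * t - Real.log (∫ ω, Real.exp
        (α * ∫ s in (0:ℝ)..t, c (X s ω)) ∂(μ x))| ≤
        |α| * |lam| + |α| * K + |α| * Cb := by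
      have c1 := abs_sub_le (α * lam * t) (α * lam * (n:ℝ))
        (Real.log (∫ ω, Real.exp (α * ∫ s in (0:ℝ)..t, c (X s ω)) ∂(μ x)))
      have c2 := abs_sub_le (α * lam * (n:ℝ))
        (Real.log (∫ ω, Real.exp (α * ∫ s in (0:ℝ)..(n:ℝ), c (X s ω)) ∂(μ x)))
        (Real.log (∫ ω, Real.exp (α * ∫ s in (0:ℝ)..t, c (X s ω)) ∂(μ x)))
      have c3 : |Real.log (∫ ω, Real.exp (α * ∫ s in (0:ℝ)..(n:ℝ), c (X s ω)) ∂(μ x)) -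
          Real.log (∫ ω, Real.exp (α * ∫ s in (0:ℝ)..t, c (X s ω)) ∂(μ x))| ≤
          |α| * Cb := by
        rw [abs_le]; constructor <;> linarith
      linarith
    have hexp : |α| * (Cb + K + |lam|) = |α| * |lam| + |α| * K + |α| * Cb := by ring
    rw [hexp]
    exact hchain
  have hK0 : 0 ≤ K := by
    -- need a point of E; take it from the statements (handled separately below)
    by_cases hE : Nonempty E
    · obtain ⟨x⟩ := hE
      have := hspan x x
      simpa using this
    · -- if E is empty, spanSem w = sSup ∅ - sInf ∅ = 0
      have : Set.range w = ∅ := by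
        rw [Set.range_eq_empty_iff]; exact not_nonempty_iff.1 hE
      have hs := hwspan
      rw [spanSem, this] at hs
      simpa using hs
  constructor
  · -- first conclusion
    intro k hk x
    have hk0 : (0:ℝ) < (k:ℝ) := by exact_mod_cast hk
    have h := habs (k:ℝ) (Real.log (∫ ω, Real.exp
      (α * ∫ s in (0:ℝ)..(k:ℝ), c (X s ω)) ∂(μ x))) K hk0 (hlog k hk x)
    rw [abs_sub_comm] at h
    calc |lam - 1 / (α * (k:ℝ)) * Real.log (∫ ω, Real.exp
          (α * ∫ s in (0:ℝ)..(k:ℝ), c (X s ω)) ∂(μ x))| ≤ K / (k:ℝ) := h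
      _ ≤ 2 * K / (k:ℝ) := (div_le_div_iff_of_pos_right hk0).2 (by linarith)
  · intro x
    have htendN : Tendsto (fun k : ℕ => 1 / (α * (k:ℝ)) *
        Real.log (∫ ω, Real.exp (α * ∫ s in (0:ℝ)..(k:ℝ), c (X s ω)) ∂(μ x)))
        atTop (𝓝 lam) := by
      have hb : ∀ᶠ k : ℕ in atTop, ‖(1 / (α * (k:ℝ)) *
          Real.log (∫ ω, Real.exp (α * ∫ s in (0:ℝ)..(k:ℝ), c (X s ω)) ∂(μ x))) - lam‖
          ≤ K / (k:ℝ) := by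
        filter_upwards [eventually_ge_atTop 1] with k hk
        have hk0 : (0:ℝ) < (k:ℝ) := by exact_mod_cast hk
        simpa [Real.norm_eq_abs] using habs (k:ℝ) _ K hk0 (hlog k hk x)
      have h0 : Tendsto (fun k : ℕ => K / (k:ℝ)) atTop (𝓝 0) :=
        tendsto_const_div_atTop_nhds_zero_nat K
      have h1 := squeeze_zero_norm' hb h0
      have h2 := h1.add (tendsto_const_nhds : Tendsto (fun _ : ℕ => lam) atTop (𝓝 lam))
      simpa using h2
    have htendR : Tendsto (fun t : ℝ => 1 / (α * t) *
        Real.log (∫ ω, Real.exp (α * ∫ s in (0:ℝ)..t, c (X s ω)) ∂(μ x)))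
        atTop (𝓝 lam) := by
      have hb : ∀ᶠ t : ℝ in atTop, ‖(1 / (α * t) *
          Real.log (∫ ω, Real.exp (α * ∫ s in (0:ℝ)..t, c (X s ω)) ∂(μ x))) - lam‖
          ≤ (Cb + K + |lam|) / t := by
        filter_upwards [eventually_ge_atTop 1] with t ht
        have ht0 : (0:ℝ) < t := by linarith
        simpa [Real.norm_eq_abs] using habs t _ (Cb + K + |lam|) ht0 (hlogR x t ht)
      have h0 : Tendsto (fun t : ℝ => (Cb + K + |lam|) / t) atTop (𝓝 0) :=
        tendsto_const_nhds.div_atTop tendsto_id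
      have h1 := squeeze_zero_norm' hb h0
      have h2 := h1.add (tendsto_const_nhds : Tendsto (fun _ : ℝ => lam) atTop (𝓝 lam))
      simpa using h2
    exact ⟨htendR.liminf_eq, htendN.liminf_eq⟩
end
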